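/- arXiv:2107.05330 — 3 statements merged into one kernel-verified Lean document; each statement's English description precedes it below -/
import Mathlib

section
/- Let F_1, …, F_N : ℝ^d → ℝ be convex and differentiable with L_F-Lipschitz gradients (with respect to the Euclidean norm), let F = (1/N)·Σ_{i=1}^N F_i, and let w* be a global minimizer of F. Then for every w ∈ ℝ^d, (1/N)·Σ_{i=1}^N ‖∇F_i(w) − ∇F(w)‖₂² ≤ 4·L_F·(F(w) − F(w*)) + 2·σ_F², where σ_F² := (1/N)·Σ_{i=1}^N ‖∇F_i(w*)‖₂². -/
/-!
Convexity and `L`-smoothness make each gradient co-coercive: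
`‖∇F_i(w) - ∇F_i(w*)‖² ≤ 2L (F_i(w) - F_i(w*) - ⟪∇F_i(w*), w - w*⟫)`, obtained from the descent
lemma applied to `F_i - ⟪∇F_i(w*), ·⟫`, which is minimized at `w*`. The spread of the gradients
about their mean is at most their mean square, and `‖a‖² ≤ 2‖a - b‖² + 2‖b‖²` with `b = ∇F_i(w*)`.
Averaging over `i`, the linear terms cancel because `∑ᵢ ∇F_i(w*) = 0` at the minimizer of `F`.
-/

open RealInnerProductSpace Finset

section Mean

variable {ι E : Type*} [Fintype ι] [NormedAddCommGroup E] [InnerProductSpace ℝ E]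

lemma sum_norm_sub_mean_sq_le (a : ι → E) :
    ∑ i, ‖a i - (1 / (Fintype.card ι : ℝ)) • ∑ j, a j‖ ^ 2 ≤ ∑ i, ‖a i‖ ^ 2 := by
  set n : ℝ := (Fintype.card ι : ℝ)
  set m := (1 / n) • ∑ j, a j
  have hsum : ∑ i, a i = n • m := by
    rcases eq_or_ne n 0 with hn | hn
    · have : IsEmpty ι := Fintype.card_eq_zero_iff.mp (Nat.cast_eq_zero.mp hn)
      simp [hn]
    · rw [smul_smul, mul_one_div_cancel hn, one_smul]
  calc ∑ i, ‖a i - m‖ ^ 2 = ∑ i, ‖a i‖ ^ 2 - 2 * ⟪∑ i, a i, m⟫ + n * ‖m‖ ^ 2 := by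
        simp only [norm_sub_sq_real, sum_add_distrib, sum_sub_distrib, ← mul_sum, sum_inner,
          sum_const, card_univ, nsmul_eq_mul, n]
    _ = ∑ i, ‖a i‖ ^ 2 - n * ‖m‖ ^ 2 := by
        rw [hsum, real_inner_smul_left, real_inner_self_eq_norm_sq]
        ring
    _ ≤ ∑ i, ‖a i‖ ^ 2 := by
        have : 0 ≤ n * ‖m‖ ^ 2 := by positivity
        linarith

end Mean

section Smooth

variable {E : Type*} [NormedAddCommGroup E] [InnerProductSpace ℝ E] [CompleteSpace E]
  {f : E → ℝ} {g : E → E} {L : ℝ}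

lemma HasGradientAt.fun_sum {ι : Type*} {u : Finset ι} {F : ι → E → ℝ} {G : ι → E} {x : E}
    (h : ∀ i ∈ u, HasGradientAt (F i) (G i) x) :
    HasGradientAt (fun y => ∑ i ∈ u, F i y) (∑ i ∈ u, G i) x := by
  rw [hasGradientAt_iff_hasFDerivAt, map_sum]
  exact HasFDerivAt.fun_sum fun i hi => (h i hi).hasFDerivAt

lemma HasGradientAt.const_mul {G x : E} (hf : HasGradientAt f G x) (c : ℝ) :
    HasGradientAt (fun y => c * f y) (c • G) x := by
  rw [hasGradientAt_iff_hasFDerivAt, map_smul]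
  exact hf.hasFDerivAt.const_mul c

lemma IsLocalMin.hasGradientAt_eq_zero {G x : E} (h : IsLocalMin f x) (hf : HasGradientAt f G x) :
    G = 0 := by
  simpa using h.hasFDerivAt_eq_zero hf.hasFDerivAt

lemma HasGradientAt.hasDerivAt_comp_lineMap {G x y : E} {t : ℝ}
    (hf : HasGradientAt f G (AffineMap.lineMap x y t)) :
    HasDerivAt (fun s : ℝ => f (AffineMap.lineMap x y s)) ⟪G, y - x⟫ t := by
  exact hf.hasFDerivAt.comp_hasDerivAt t AffineMap.hasDerivAt_lineMap

lemma ConvexOn.add_inner_le_of_hasGradientAt {G x : E} (hconv : ConvexOn ℝ Set.univ f)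
    (hf : HasGradientAt f G x) (y : E) : f x + ⟪G, y - x⟫ ≤ f y := by
  have hline : ConvexOn ℝ Set.univ (fun s : ℝ => f (AffineMap.lineMap x y s)) := by
    have := hconv.comp_affineMap (AffineMap.lineMap x y)
    rw [Set.preimage_univ] at this
    exact this
  have hd : HasDerivAt (fun s : ℝ => f (AffineMap.lineMap x y s)) ⟪G, y - x⟫ 0 :=
    HasGradientAt.hasDerivAt_comp_lineMap (by simpa using hf)
  have hslope := hline.le_slope_of_hasDerivAt (Set.mem_univ 0) (Set.mem_univ 1) zero_lt_one hd
  simp only [slope_def_field, AffineMap.lineMap_apply_one, AffineMap.lineMap_apply_zero, sub_zero,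
    div_one] at hslope
  linarith

lemma le_add_inner_add_of_lipschitz_gradient (hf : ∀ x, HasGradientAt f (g x) x)
    (hg : ∀ x y, ‖g x - g y‖ ≤ L * ‖x - y‖) (x y : E) :
    f y ≤ f x + ⟪g x, y - x⟫ + L / 2 * ‖y - x‖ ^ 2 := by
  set v := y - x
  let h : ℝ → ℝ := fun t => f (AffineMap.lineMap x y t) - t * ⟪g x, v⟫ - L / 2 * t ^ 2 * ‖v‖ ^ 2
  have hd : ∀ t, HasDerivAt h (⟪g (AffineMap.lineMap x y t) - g x, v⟫ - L * t * ‖v‖ ^ 2) t := by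
    intro t
    have := (((hf (AffineMap.lineMap x y t)).hasDerivAt_comp_lineMap).sub
      ((hasDerivAt_id t).mul_const ⟪g x, v⟫)).sub
        (((hasDerivAt_pow 2 t).const_mul (L / 2)).mul_const (‖v‖ ^ 2))
    refine this.congr_deriv ?_
    simp only [inner_sub_left, v]
    ring
  have hderiv_nonpos : ∀ t ∈ interior (Set.Icc (0 : ℝ) 1), deriv h t ≤ 0 := by
    intro t ht
    rw [interior_Icc] at ht
    have hstep : AffineMap.lineMap x y t - x = t • v := by
      simp [AffineMap.lineMap_apply_module', v]
    calc deriv h t = ⟪g (AffineMap.lineMap x y t) - g x, v⟫ - L * t * ‖v‖ ^ 2 := (hd t).deriv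
      _ ≤ ‖g (AffineMap.lineMap x y t) - g x‖ * ‖v‖ - L * t * ‖v‖ ^ 2 := by
          gcongr; exact real_inner_le_norm _ _
      _ ≤ L * ‖t • v‖ * ‖v‖ - L * t * ‖v‖ ^ 2 := by
          gcongr; simpa only [hstep] using hg (AffineMap.lineMap x y t) x
      _ = 0 := by rw [norm_smul, Real.norm_of_nonneg ht.1.le]; ring
  have hanti : AntitoneOn h (Set.Icc 0 1) :=
    antitoneOn_of_deriv_nonpos (convex_Icc 0 1) (fun t _ => (hd t).continuousAt.continuousWithinAt)
      (fun t _ => (hd t).differentiableAt.differentiableWithinAt) hderiv_nonpos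
  have h01 := hanti (by simp) (by simp) zero_le_one
  simp only [h, AffineMap.lineMap_apply_zero, AffineMap.lineMap_apply_one] at h01
  linarith

lemma sq_norm_gradient_le_of_forall_le (hL : 0 < L) (hf : ∀ x, HasGradientAt f (g x) x)
    (hg : ∀ x y, ‖g x - g y‖ ≤ L * ‖x - y‖) {m : ℝ} (hm : ∀ z, m ≤ f z) (x : E) :
    ‖g x‖ ^ 2 ≤ 2 * L * (f x - m) := by
  -- a gradient step of length `1 / L` lowers `f` by at least `‖g x‖ ^ 2 / (2 * L)`
  have hstep : x - L⁻¹ • g x - x = -(L⁻¹ • g x) := by abel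
  have hdescent := le_add_inner_add_of_lipschitz_gradient hf hg x (x - L⁻¹ • g x)
  rw [hstep, inner_neg_right, real_inner_smul_right, real_inner_self_eq_norm_sq, norm_neg,
    norm_smul, Real.norm_of_nonneg (inv_nonneg.mpr hL.le)] at hdescent
  have hval : f x + -(L⁻¹ * ‖g x‖ ^ 2) + L / 2 * (L⁻¹ * ‖g x‖) ^ 2
      = f x - ‖g x‖ ^ 2 / (2 * L) := by
    field_simp
    ring
  have := (hm _).trans (hdescent.trans hval.le)
  rw [le_sub_iff_add_le, ← le_sub_iff_add_le', div_le_iff₀ (by positivity)] at this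
  linarith

lemma ConvexOn.sq_norm_sub_gradient_le (hL : 0 ≤ L) (hconv : ConvexOn ℝ Set.univ f)
    (hf : ∀ x, HasGradientAt f (g x) x) (hg : ∀ x y, ‖g x - g y‖ ≤ L * ‖x - y‖) (x y : E) :
    ‖g x - g y‖ ^ 2 ≤ 2 * L * (f x - f y - ⟪g y, x - y⟫) := by
  rcases hL.eq_or_lt with rfl | hL
  · simpa using hg x y
  set φ : E → ℝ := fun z => f z - ⟪g y, z⟫
  have hφ : ∀ z, HasGradientAt φ (g z - g y) z := fun z => by
    rw [hasGradientAt_iff_hasFDerivAt, map_sub]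
    exact (hf z).hasFDerivAt.sub (InnerProductSpace.toDual ℝ E (g y)).hasFDerivAt
  have hφmin : ∀ z, φ y ≤ φ z := fun z => by
    have := hconv.add_inner_le_of_hasGradientAt (hf y) z
    simp only [φ, inner_sub_right] at this ⊢
    linarith
  calc ‖g x - g y‖ ^ 2 ≤ 2 * L * (φ x - φ y) :=
        sq_norm_gradient_le_of_forall_le hL hφ
          (fun a b => by simpa only [sub_sub_sub_cancel_right] using hg a b) hφmin x
    _ = 2 * L * (f x - f y - ⟪g y, x - y⟫) := by
        simp only [φ, inner_sub_right]
        ring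

lemma ConvexOn.sq_norm_gradient_le (hL : 0 ≤ L) (hconv : ConvexOn ℝ Set.univ f)
    (hf : ∀ x, HasGradientAt f (g x) x) (hg : ∀ x y, ‖g x - g y‖ ≤ L * ‖x - y‖) (x y : E) :
    ‖g x‖ ^ 2 ≤ 4 * L * (f x - f y - ⟪g y, x - y⟫) + 2 * ‖g y‖ ^ 2 := by
  have htri : ‖g x‖ ≤ ‖g x - g y‖ + ‖g y‖ := norm_le_norm_sub_add _ _
  calc ‖g x‖ ^ 2 ≤ 2 * (‖g x - g y‖ ^ 2 + ‖g y‖ ^ 2) :=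
        (pow_le_pow_left₀ (norm_nonneg _) htri 2).trans add_sq_le
    _ ≤ 4 * L * (f x - f y - ⟪g y, x - y⟫) + 2 * ‖g y‖ ^ 2 := by
        linarith [hconv.sq_norm_sub_gradient_le hL hf hg x y]

end Smooth

theorem stmt6_general (d N : ℕ) (LF : ℝ) (hLF : 0 ≤ LF)
    (F : Fin N → EuclideanSpace ℝ (Fin d) → ℝ)
    (gF : Fin N → EuclideanSpace ℝ (Fin d) → EuclideanSpace ℝ (Fin d))
    (hconv : ∀ i, ConvexOn ℝ Set.univ (F i))
    (hdiff : ∀ i x, HasGradientAt (F i) (gF i x) x)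
    (hlip : ∀ i x y, ‖gF i x - gF i y‖ ≤ LF * ‖x - y‖)
    (Fbar : EuclideanSpace ℝ (Fin d) → ℝ)
    (hFbar : ∀ w, Fbar w = (1 / (N : ℝ)) * ∑ i, F i w)
    (wstar : EuclideanSpace ℝ (Fin d)) (hmin : ∀ w, Fbar wstar ≤ Fbar w)
    (σFsq : ℝ) (hσ : σFsq = (1 / (N : ℝ)) * ∑ i, ‖gF i wstar‖ ^ 2) :
    ∀ w, (1 / (N : ℝ)) * ∑ i, ‖gF i w - (1 / (N : ℝ)) • ∑ j, gF j w‖ ^ 2 ≤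
      4 * LF * (Fbar w - Fbar wstar) + 2 * σFsq := by
  intro w
  have hstationary : (1 / (N : ℝ)) • ∑ i, gF i wstar = 0 := by
    refine IsLocalMin.hasGradientAt_eq_zero (f := Fbar) (.of_forall hmin) ?_
    rw [funext hFbar]
    exact (HasGradientAt.fun_sum fun i _ => hdiff i wstar).const_mul _
  calc (1 / (N : ℝ)) * ∑ i, ‖gF i w - (1 / (N : ℝ)) • ∑ j, gF j w‖ ^ 2
      ≤ (1 / (N : ℝ)) * ∑ i, ‖gF i w‖ ^ 2 := by
        gcongr _ * ?_
        simpa using sum_norm_sub_mean_sq_le fun i => gF i w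
    _ ≤ (1 / (N : ℝ)) * ∑ i,
          (4 * LF * (F i w - F i wstar - ⟪gF i wstar, w - wstar⟫) + 2 * ‖gF i wstar‖ ^ 2) := by
        gcongr with i
        exact (hconv i).sq_norm_gradient_le hLF (hdiff i) (hlip i) w wstar
    _ = 4 * LF * (Fbar w - Fbar wstar - ⟪(1 / (N : ℝ)) • ∑ i, gF i wstar, w - wstar⟫)
          + 2 * σFsq := by
        simp only [hFbar, hσ, sum_add_distrib, sum_sub_distrib, ← mul_sum, ← sum_inner,
          real_inner_smul_left]
        ring
    _ = 4 * LF * (Fbar w - Fbar wstar) + 2 * σFsq := by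
        rw [hstationary, inner_zero_left, sub_zero]

/-- Let F_1,…,F_N : ℝ^d → ℝ be convex differentiable with L_F-Lipschitz
gradients, F = (1/N)·Σ F_i (so ∇F = (1/N)·Σ ∇F_i), and w* a global minimizer of F.
Then for every w,
(1/N)·Σ_i ‖∇F_i(w) − ∇F(w)‖₂² ≤ 4·L_F·(F(w) − F(w*)) + 2·σ_F²,
where σ_F² = (1/N)·Σ_i ‖∇F_i(w*)‖₂². -/
theorem stmt6 (d N : ℕ) (hN : 0 < N) (LF : ℝ) (hLF : 0 ≤ LF)
    (F : Fin N → EuclideanSpace ℝ (Fin d) → ℝ)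
    (gF : Fin N → EuclideanSpace ℝ (Fin d) → EuclideanSpace ℝ (Fin d))
    (hconv : ∀ i, ConvexOn ℝ Set.univ (F i))
    (hdiff : ∀ i x, HasGradientAt (F i) (gF i x) x)
    (hlip : ∀ i x y, ‖gF i x - gF i y‖ ≤ LF * ‖x - y‖)
    (Fbar : EuclideanSpace ℝ (Fin d) → ℝ)
    (hFbar : ∀ w, Fbar w = (1 / (N : ℝ)) * ∑ i, F i w)
    (wstar : EuclideanSpace ℝ (Fin d)) (hmin : ∀ w, Fbar wstar ≤ Fbar w)
    (σFsq : ℝ) (hσ : σFsq = (1 / (N : ℝ)) * ∑ i, ‖gF i wstar‖ ^ 2) :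
    ∀ w, (1 / (N : ℝ)) * ∑ i, ‖gF i w - (1 / (N : ℝ)) • ∑ j, gF j w‖ ^ 2 ≤
      4 * LF * (Fbar w - Fbar wstar) + 2 * σFsq :=
  stmt6_general d N LF hLF F gF hconv hdiff hlip Fbar hFbar wstar hmin σFsq hσ
end

section
/- Let X : ℝ^{N_I} → ℝ^{N_D} be a linear map, let θ* ∈ ℝ^{N_I}, and set y = Xθ*. Let f : ℝ^{N_I} → ℝ, let α_f > 0 and 0 < γ ≤ 1/α_f, and let θ̂ be a minimizer over θ ∈ ℝ^{N_I} of the function θ ↦ ‖y − Xθ‖₂² + γ·f(θ). Suppose that |f(θ*) − f(θ̂)| ≤ α_f·‖θ* − θ̂‖₂ and that ‖X(θ̂ − θ*)‖₂ ≥ ε·‖θ̂ − θ*‖₂ for some ε > 0. Then ‖θ̂ − θ*‖₂ ≤ 1/ε². -/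
/-- Deterministic core of the recovery guarantee (Theorem 2).
If y = Xθ*, θ̂ minimizes ‖y − Xθ‖₂² + γ·f(θ) with 0 < γ ≤ 1/α_f,
|f(θ*) − f(θ̂)| ≤ α_f‖θ* − θ̂‖₂ and ‖X(θ̂ − θ*)‖₂ ≥ ε‖θ̂ − θ*‖₂ with ε > 0,
then ‖θ̂ − θ*‖₂ ≤ 1/ε². -/
theorem stmt8 (NI ND : ℕ)
    (X : EuclideanSpace ℝ (Fin NI) →ₗ[ℝ] EuclideanSpace ℝ (Fin ND))
    (θstar : EuclideanSpace ℝ (Fin NI))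
    (y : EuclideanSpace ℝ (Fin ND)) (hy : y = X θstar)
    (f : EuclideanSpace ℝ (Fin NI) → ℝ) (αf γ ε : ℝ) (hαf : 0 < αf)
    (hγ0 : 0 < γ) (hγ : γ ≤ 1 / αf) (hε : 0 < ε)
    (θhat : EuclideanSpace ℝ (Fin NI))
    (hmin : ∀ θ, ‖y - X θhat‖ ^ 2 + γ * f θhat ≤ ‖y - X θ‖ ^ 2 + γ * f θ)
    (hf : |f θstar - f θhat| ≤ αf * ‖θstar - θhat‖)
    (hX : ε * ‖θhat - θstar‖ ≤ ‖X (θhat - θstar)‖) :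
    ‖θhat - θstar‖ ≤ 1 / ε ^ 2 := by
  set d := ‖θhat - θstar‖ with hd
  have hd0 : 0 ≤ d := norm_nonneg _
  have hdd : ‖θstar - θhat‖ = d := by rw [hd, norm_sub_rev]
  have h1 := hmin θstar
  have hy2 : ‖y - X θhat‖ = ‖X (θhat - θstar)‖ := by
    rw [hy, ← map_sub, ← norm_neg, ← map_neg, neg_sub]
  have hy3 : y - X θstar = 0 := by rw [hy, sub_self]
  rw [hy2, hy3, norm_zero] at h1
  have h2 : ‖X (θhat - θstar)‖ ^ 2 ≤ γ * (f θstar - f θhat) := by nlinarith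
  have h3 : γ * (f θstar - f θhat) ≤ γ * (αf * d) := by
    apply mul_le_mul_of_nonneg_left _ hγ0.le
    calc f θstar - f θhat ≤ |f θstar - f θhat| := le_abs_self _
      _ ≤ αf * ‖θstar - θhat‖ := hf
      _ = αf * d := by rw [hdd]
  have h4 : γ * (αf * d) ≤ d := by
    have : γ * αf ≤ 1 := by
      rw [le_div_iff₀ hαf] at hγ; linarith
    nlinarith
  have h5 : (ε * d) ^ 2 ≤ d := by
    calc (ε * d) ^ 2 ≤ ‖X (θhat - θstar)‖ ^ 2 := by
          apply pow_le_pow_left₀ (by positivity) hX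
      _ ≤ d := le_trans h2 (le_trans h3 h4)
  rw [le_div_iff₀ (by positivity)]
  nlinarith
end

section
/- Let X : ℝ^{N_I} → ℝ^{N_D} be a linear map, let θ* ∈ ℝ^{N_I}, set y = Xθ*, let f : ℝ^{N_I} → ℝ be convex, let γ > 0, and let θ̂ be a minimizer over θ ∈ ℝ^{N_I} of the function θ ↦ ‖y − Xθ‖₂² + γ·f(θ). Then: (i) ‖X(θ̂ − θ*)‖₂² ≤ γ·(f(θ*) − f(θ̂)); (ii) in particular f(θ̂) ≤ f(θ*); and (iii) for every subgradient u of f at θ*, ⟨θ̂ − θ*, u⟩ ≤ 0, i.e. the error vector θ̂ − θ* lies in the cone C_f = {d ∈ ℝ^{N_I} : ⟨d, u⟩ ≤ 0 for every subgradient u of f at θ*}. -/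
open RealInnerProductSpace

/-- If y = Xθ*, f is convex, γ > 0, and θ̂ minimizes
‖y − Xθ‖₂² + γ·f(θ), then
(i) ‖X(θ̂ − θ*)‖₂² ≤ γ·(f(θ*) − f(θ̂));
(ii) f(θ̂) ≤ f(θ*);
(iii) ⟨θ̂ − θ*, u⟩ ≤ 0 for every subgradient u of f at θ*, i.e. θ̂ − θ* ∈ C_f. -/
theorem stmt9 (NI ND : ℕ)
    (X : EuclideanSpace ℝ (Fin NI) →ₗ[ℝ] EuclideanSpace ℝ (Fin ND))
    (θstar : EuclideanSpace ℝ (Fin NI))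
    (y : EuclideanSpace ℝ (Fin ND)) (hy : y = X θstar)
    (f : EuclideanSpace ℝ (Fin NI) → ℝ) (hconv : ConvexOn ℝ Set.univ f)
    (γ : ℝ) (hγ : 0 < γ)
    (θhat : EuclideanSpace ℝ (Fin NI))
    (hmin : ∀ θ, ‖y - X θhat‖ ^ 2 + γ * f θhat ≤ ‖y - X θ‖ ^ 2 + γ * f θ) :
    ‖X (θhat - θstar)‖ ^ 2 ≤ γ * (f θstar - f θhat) ∧
    f θhat ≤ f θstar ∧
    (∀ u : EuclideanSpace ℝ (Fin NI),
      (∀ dv, f (θstar + dv) ≥ f θstar + ⟪u, dv⟫) → ⟪θhat - θstar, u⟫ ≤ 0) := by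
  have h1 := hmin θstar
  rw [hy] at h1
  have hsub : X θstar - X θhat = -(X (θhat - θstar)) := by
    simp [map_sub]
  have hnorm : ‖X θstar - X θhat‖ = ‖X (θhat - θstar)‖ := by
    rw [hsub, norm_neg]
  rw [sub_self, norm_zero, hnorm] at h1
  have hi : ‖X (θhat - θstar)‖ ^ 2 ≤ γ * (f θstar - f θhat) := by
    ring_nf
    ring_nf at h1
    nlinarith [sq_nonneg ‖X (θhat - θstar)‖]
  have hii : f θhat ≤ f θstar := by
    nlinarith [sq_nonneg ‖X (θhat - θstar)‖]
  refine ⟨hi, hii, fun u hu => ?_⟩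
  have := hu (θhat - θstar)
  rw [add_sub_cancel] at this
  have : ⟪u, θhat - θstar⟫ ≤ f θhat - f θstar := by linarith
  rw [real_inner_comm]
  linarith
end
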